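/- arXiv:1405.7828 — 8 statements merged into one kernel-verified Lean document; each statement's English description precedes it below -/
import Mathlib

section
/- For all natural numbers n, k, m with n + m > 2k and 2k > 2m, the ratio of binomial coefficients C(n, k-m) / C(n, k) is at most (k / (n - k + m))^m (as rational/real numbers). -/
/-!
Writing `a = k - m`, the identity `C(n, k) C(k, m) = C(n, a) C(n - a, m)` turns the ratio into
`C(k, m) / C(n - a, m) = ∏_{i < m} (k - i) / (n - a - i)`. Since `k ≤ n - a`, each factor is at
most `k / (n - a)`.
-/

namespace Nat

theorem descFactorial_mul_pow_le_of_le {q p : ℕ} (hqp : q ≤ p) :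
    ∀ m : ℕ, q.descFactorial m * p ^ m ≤ p.descFactorial m * q ^ m
  | 0 => by simp
  | m + 1 => by
    have factor_le : (q - m) * p ≤ (p - m) * q := by
      rw [Nat.sub_mul, Nat.sub_mul, Nat.mul_comm q p]
      exact Nat.sub_le_sub_left (Nat.mul_le_mul_left m hqp) _
    calc q.descFactorial (m + 1) * p ^ (m + 1)
        = ((q - m) * p) * (q.descFactorial m * p ^ m) := by rw [descFactorial_succ]; ring
      _ ≤ ((p - m) * q) * (p.descFactorial m * q ^ m) :=
        Nat.mul_le_mul factor_le (descFactorial_mul_pow_le_of_le hqp m)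
      _ = p.descFactorial (m + 1) * q ^ (m + 1) := by rw [descFactorial_succ]; ring

theorem choose_mul_pow_le_of_le {q p : ℕ} (hqp : q ≤ p) (m : ℕ) :
    q.choose m * p ^ m ≤ p.choose m * q ^ m := by
  have h := descFactorial_mul_pow_le_of_le hqp m
  rw [descFactorial_eq_factorial_mul_choose, descFactorial_eq_factorial_mul_choose,
    Nat.mul_assoc, Nat.mul_assoc] at h
  exact Nat.le_of_mul_le_mul_left h (factorial_pos m)

theorem choose_mul_choose_eq_choose_sub_mul {n k m : ℕ} (hmk : m ≤ k) :
    n.choose k * k.choose m = n.choose (k - m) * (n - (k - m)).choose m := by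
  rw [← choose_symm hmk, choose_mul (Nat.sub_le k m), Nat.sub_sub_self hmk]

theorem choose_sub_mul_pow_le {n k m : ℕ} (hmk : m ≤ k) (hkn : k ≤ n - (k - m)) :
    n.choose (k - m) * (n - (k - m)) ^ m ≤ n.choose k * k ^ m := by
  have hpos : 0 < (n - (k - m)).choose m := choose_pos (by omega)
  refine Nat.le_of_mul_le_mul_right ?_ hpos
  calc n.choose (k - m) * (n - (k - m)) ^ m * (n - (k - m)).choose m
      = n.choose k * (k.choose m * (n - (k - m)) ^ m) := by
        rw [← Nat.mul_assoc, choose_mul_choose_eq_choose_sub_mul hmk]; ring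
    _ ≤ n.choose k * ((n - (k - m)).choose m * k ^ m) :=
        Nat.mul_le_mul_left _ (choose_mul_pow_le_of_le hkn m)
    _ = n.choose k * k ^ m * (n - (k - m)).choose m := by ring

end Nat

theorem binom_ratio_bound (n k m : ℕ) (h1 : n + m > 2 * k) (h2 : 2 * k > 2 * m) :
    (n.choose (k - m) : ℝ) / (n.choose k : ℝ) ≤ ((k : ℝ) / ((n : ℝ) - k + m)) ^ m := by
  have hmk : m ≤ k := by omega
  have hkn : k ≤ n := by omega
  have hnat := Nat.choose_sub_mul_pow_le hmk (by omega : k ≤ n - (k - m))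
  have hcast : (n : ℝ) - k + m = ((n - (k - m) : ℕ) : ℝ) := by
    rw [Nat.cast_sub (by omega), Nat.cast_sub hmk]; ring
  have hchoose : (0 : ℝ) < n.choose k := by exact_mod_cast Nat.choose_pos hkn
  have hden : (0 : ℝ) < ((n - (k - m) : ℕ) : ℝ) := by exact_mod_cast (by omega : 0 < n - (k - m))
  rw [hcast, div_pow, div_le_div_iff₀ hchoose (pow_pos hden m)]
  exact_mod_cast hnat.trans_eq (Nat.mul_comm _ _)
end

section
/- Let q ∈ [0,1] be a real number and n, r natural numbers with r ≤ n. Then ∑_{i=0}^{r} C(n,i) * (1-q)^i * q^(n-i) = ∑_{k=0}^{r} α_k * q^(n-k), where α_k = (-1)^(r-k) * C(n,k) * C(n-k-1, r-k). -/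
/-!
Induction on `r`. Raising `r` by one adds `C(n, r+1) (1-q)^(r+1) q^(n-r-1)` to the left side.
On the right, Pascal's rule for `C(n-k-1, ·)` together with
`C(n, k) C(n-k, r+1-k) = C(n, r+1) C(r+1, k)` shows that the coefficients change by
`(-1)^(r+1-k) C(n, r+1) C(r+1, k)`, and summing these against `q^(n-k)` gives
`C(n, r+1) q^(n-r-1)` times the binomial expansion of `(1-q)^(r+1)`.
-/

open Finset

/-- The paper's `α_k` (for fixed `n` and `r`). -/
def binomialTailCoeff (n r k : ℕ) : ℤ :=
  (-1) ^ (r - k) * n.choose k * (n - k - 1).choose (r - k)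

lemma binomialTailCoeff_self (n r : ℕ) : binomialTailCoeff n r r = n.choose r := by
  simp [binomialTailCoeff]

lemma binomialTailCoeff_succ {n r k : ℕ} (hkr : k ≤ r) (hrn : r < n) :
    binomialTailCoeff n (r + 1) k =
      binomialTailCoeff n r k + (-1) ^ (r + 1 - k) * n.choose (r + 1) * (r + 1).choose k := by
  have hnk : n - k = n - k - 1 + 1 := by omega
  have hrk : r + 1 - k = r - k + 1 := by omega
  have hmul : n.choose (r + 1) * (r + 1).choose k = n.choose k * (n - k).choose (r + 1 - k) :=
    Nat.choose_mul (by omega)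
  rw [hnk, hrk, Nat.choose_succ_succ] at hmul
  simp only [binomialTailCoeff, hrk, pow_succ]
  rw [mul_assoc _ (n.choose (r + 1) : ℤ), ← Nat.cast_mul, hmul]
  push_cast
  ring

variable {R : Type*} [CommRing R]

lemma sum_range_neg_one_pow_choose_mul_pow (m : ℕ) (q : R) :
    ∑ k ∈ range (m + 1), (-1) ^ (m - k) * (m.choose k : R) * q ^ (m - k) = (1 - q) ^ m := by
  rw [sub_eq_add_neg, add_pow]
  refine sum_congr rfl fun k _ => ?_
  rw [neg_pow]
  ring

lemma sum_binomialTailCoeff_succ_sub (q : R) {n r : ℕ} (hrn : r < n) :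
    ∑ k ∈ range (r + 2), (binomialTailCoeff n (r + 1) k : R) * q ^ (n - k) -
        ∑ k ∈ range (r + 1), (binomialTailCoeff n r k : R) * q ^ (n - k) =
      n.choose (r + 1) * (1 - q) ^ (r + 1) * q ^ (n - (r + 1)) := by
  have hpow : ∀ k ∈ range (r + 2), q ^ (n - k) = q ^ (r + 1 - k) * q ^ (n - (r + 1)) := by
    intro k hk
    rw [← pow_add]
    congr 1
    grind
  calc _ = ∑ k ∈ range (r + 2), (-1) ^ (r + 1 - k) * (n.choose (r + 1) * (r + 1).choose k : R) *
          q ^ (n - k) := by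
        rw [sum_range_succ, sum_range_succ _ (r + 1), binomialTailCoeff_self, sub_eq_iff_eq_add',
          ← add_assoc, ← sum_add_distrib]
        congr 1
        · refine sum_congr rfl fun k hk => ?_
          rw [binomialTailCoeff_succ (Nat.lt_succ_iff.mp (mem_range.mp hk)) hrn]
          push_cast
          ring
        · simp
    _ = n.choose (r + 1) * (∑ k ∈ range (r + 2),
          (-1) ^ (r + 1 - k) * ((r + 1).choose k : R) * q ^ (r + 1 - k)) * q ^ (n - (r + 1)) := by
        rw [mul_sum, sum_mul]
        refine sum_congr rfl fun k hk => ?_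
        rw [hpow k hk]
        ring
    _ = _ := by rw [sum_range_neg_one_pow_choose_mul_pow]

theorem sum_range_choose_mul_one_sub_pow_mul_pow (q : R) {n r : ℕ} (hrn : r ≤ n) :
    ∑ i ∈ range (r + 1), (n.choose i : R) * (1 - q) ^ i * q ^ (n - i) =
      ∑ k ∈ range (r + 1), (binomialTailCoeff n r k : R) * q ^ (n - k) := by
  induction r with
  | zero => simp [binomialTailCoeff]
  | succ r ih =>
    rw [sum_range_succ, ih (by omega), eq_comm, ← sub_eq_iff_eq_add',
      sum_binomialTailCoeff_succ_sub q (by omega)]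

theorem binomial_tail_as_alpha_sum_general (q : ℝ) (n r : ℕ) (hrn : r ≤ n) :
    ∑ i ∈ Finset.range (r + 1), (n.choose i : ℝ) * (1 - q) ^ i * q ^ (n - i) =
      ∑ k ∈ Finset.range (r + 1),
        ((-1 : ℝ) ^ (r - k) * (n.choose k : ℝ) * ((n - k - 1).choose (r - k) : ℝ)) * q ^ (n - k) := by
  rw [sum_range_choose_mul_one_sub_pow_mul_pow q hrn]
  simp [binomialTailCoeff]

theorem binomial_tail_as_alpha_sum (q : ℝ) (hq0 : 0 ≤ q) (hq1 : q ≤ 1) (n r : ℕ) (hrn : r ≤ n) :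
    ∑ i ∈ Finset.range (r + 1), (n.choose i : ℝ) * (1 - q) ^ i * q ^ (n - i) =
      ∑ k ∈ Finset.range (r + 1),
        ((-1 : ℝ) ^ (r - k) * (n.choose k : ℝ) * ((n - k - 1).choose (r - k) : ℝ)) * q ^ (n - k) :=
  binomial_tail_as_alpha_sum_general q n r hrn
end

section
/- For all natural numbers n, m, k with k ≤ n ≤ m, the ratio C(n,k)/C(m,k) is at most (n/m)^k. -/
/-! Writing `C(n,k)/C(m,k) = ∏_{i<k} (n-i)/(m-i)`, each factor is at most `n/m` because
`(n-i) m ≤ (m-i) n` amounts to `i n ≤ i m`. -/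

namespace Nat

theorem sub_mul_le_sub_mul {n m : ℕ} (hnm : n ≤ m) (i : ℕ) : (n - i) * m ≤ (m - i) * n := by
  rw [Nat.sub_mul, Nat.sub_mul, Nat.mul_comm n m]
  exact Nat.sub_le_sub_left (Nat.mul_le_mul_left i hnm) _

theorem descFactorial_mul_pow_le {n m : ℕ} (hnm : n ≤ m) (k : ℕ) :
    n.descFactorial k * m ^ k ≤ m.descFactorial k * n ^ k := by
  induction k with
  | zero => simp
  | succ k ih =>
    calc n.descFactorial (k + 1) * m ^ (k + 1)
        = (n - k) * m * (n.descFactorial k * m ^ k) := by rw [descFactorial_succ]; ring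
      _ ≤ (m - k) * n * (m.descFactorial k * n ^ k) :=
          Nat.mul_le_mul (sub_mul_le_sub_mul hnm k) ih
      _ = m.descFactorial (k + 1) * n ^ (k + 1) := by rw [descFactorial_succ]; ring

theorem choose_mul_pow_le {n m : ℕ} (hnm : n ≤ m) (k : ℕ) :
    n.choose k * m ^ k ≤ m.choose k * n ^ k := by
  have h := descFactorial_mul_pow_le hnm k
  rw [descFactorial_eq_factorial_mul_choose, descFactorial_eq_factorial_mul_choose,
    Nat.mul_assoc, Nat.mul_assoc] at h
  exact Nat.le_of_mul_le_mul_left h k.factorial_pos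

end Nat

theorem choose_ratio_le_pow_general (n m k : ℕ) (hnm : n ≤ m) :
    (n.choose k : ℝ) / (m.choose k : ℝ) ≤ ((n : ℝ) / m) ^ k := by
  rcases m.eq_zero_or_pos with rfl | hm
  · obtain rfl := Nat.le_zero.mp hnm
    rcases k with _ | k <;> simp
  rcases (m.choose k).eq_zero_or_pos with hmk | hmk
  · rw [hmk, Nat.cast_zero, div_zero]
    positivity
  rw [div_pow, div_le_div_iff₀ (by exact_mod_cast hmk) (by positivity),
    mul_comm ((n : ℝ) ^ k)]
  exact_mod_cast Nat.choose_mul_pow_le hnm k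

theorem choose_ratio_le_pow (n m k : ℕ) (hkn : k ≤ n) (hnm : n ≤ m) :
    (n.choose k : ℝ) / (m.choose k : ℝ) ≤ ((n : ℝ) / m) ^ k :=
  choose_ratio_le_pow_general n m k hnm
end

section
/- Let H(x) = -x·log x - (1-x)·log(1-x) be the binary entropy (natural log), let d, γ, ε, α be reals with γ > 1/2, 0 < ε < α, 2γα < 1, and d > 1 + γ·(1-α)/(1-2γα). Then the function F(x) = H(x) + (1/2)·H(2γx) + 2dγx·H(1/(2γ)) - d·H(x) is convex on [ε, α]. -/
/-!
Up to a linear term, `F = (1 - d) H(x) + ½ H(2γx)`, and `x ↦ H(cx)` has second derivative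
`-c / (x (1 - cx))`. Hence `F''` has the sign of `(d - 1)(1 - 2γx) - γ(1 - x)`, which is affine in
`x`; it is positive at `x = α` by the hypothesis on `d`, and at `x = 0` because that hypothesis
forces `d - 1 > γ` when `2γ > 1`.
-/

noncomputable def binEnt (x : ℝ) : ℝ := -x * Real.log x - (1 - x) * Real.log (1 - x)

open Real Set

lemma binEnt_eq_binEntropy : binEnt = binEntropy := by
  funext p
  simp only [binEnt, binEntropy, log_inv]
  ring

lemma hasDerivAt_binEntropy_comp_mul {c x : ℝ} (h₀ : c * x ≠ 0) (h₁ : c * x ≠ 1) :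
    HasDerivAt (fun y => binEntropy (c * y)) (c * (log (1 - c * x) - log (c * x))) x :=
  ((hasDerivAt_binEntropy h₀ h₁).comp x ((hasDerivAt_id' x).const_mul c)).congr_deriv (by ring)

lemma hasDerivAt_mul_log_one_sub_mul_sub_log_mul {c x : ℝ} (hc : c ≠ 0) (hx : x ≠ 0)
    (h₁ : 1 - c * x ≠ 0) :
    HasDerivAt (fun y => c * (log (1 - c * y) - log (c * y))) (-c / (x * (1 - c * x))) x := by
  have hcx := (hasDerivAt_id' x).const_mul c
  refine ((((hcx.const_sub 1).log h₁).sub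
    (hcx.log (mul_ne_zero hc hx))).const_mul c).congr_deriv ?_
  field_simp
  ring

theorem convexOn_Icc_binEntropy_add_binEntropy_comp_mul {a b c k ε α : ℝ} (hε : 0 < ε)
    (hα : α ≤ 1) (hc : 0 < c) (hcα : c * α ≤ 1)
    (h : ∀ x ∈ Ioo ε α, 0 ≤ -a * (1 - c * x) - b * c * (1 - x)) :
    ConvexOn ℝ (Icc ε α) (fun x => a * binEntropy x + b * binEntropy (c * x) + k * x) := by
  refine convexOn_of_hasDerivWithinAt2_nonneg (convex_Icc ε α) (by fun_prop)
    (f' := fun x =>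
      a * (log (1 - x) - log x) + b * (c * (log (1 - c * x) - log (c * x))) + k)
    (f'' := fun x => (-a * (1 - c * x) - b * c * (1 - x)) / (x * (1 - x) * (1 - c * x)))
    ?_ ?_ ?_
  all_goals
    rw [interior_Icc]
    intro x hx
    have hx₀ : 0 < x := hε.trans hx.1
    have hx₁ : 0 < 1 - x := by linarith [hx.2]
    have hcx : 0 < 1 - c * x := by nlinarith [hx.2]
  · have hH := hasDerivAt_binEntropy hx₀.ne' (by linarith : x ≠ 1)
    have hHc := hasDerivAt_binEntropy_comp_mul (by positivity) (by linarith : c * x ≠ 1)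
    exact (((hH.const_mul a).add (hHc.const_mul b)).add
      ((hasDerivAt_id' x).const_mul k |>.congr_deriv (mul_one k))).hasDerivWithinAt
  · have hH' : HasDerivAt (fun y => log (1 - y) - log y) (-1 / (x * (1 - x))) x := by
      simpa using
        hasDerivAt_mul_log_one_sub_mul_sub_log_mul one_ne_zero hx₀.ne' (by simpa using hx₁.ne')
    have hHc' := hasDerivAt_mul_log_one_sub_mul_sub_log_mul hc.ne' hx₀.ne' hcx.ne'
    refine HasDerivAt.hasDerivWithinAt
      ((((hH'.const_mul a).add (hHc'.const_mul b)).add_const k).congr_deriv ?_)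
    rw [mul_div_assoc', mul_div_assoc', div_add_div _ _ (by positivity) (by positivity),
      div_eq_div_iff (by positivity) (by positivity)]
    ring
  · exact div_nonneg (h x hx) (by positivity)

lemma second_deriv_numerator_nonneg {d γ α x : ℝ} (hγ : 1 / 2 < γ) (hx : 0 ≤ x)
    (hxα : x ≤ α) (hα : 2 * γ * α < 1) (hd : 1 + γ * (1 - α) / (1 - 2 * γ * α) < d) :
    0 ≤ (d - 1) * (1 - 2 * γ * x) - γ * (1 - x) := by
  have hα' : 0 < 1 - 2 * γ * α := by linarith
  have hdα : γ * (1 - α) < (d - 1) * (1 - 2 * γ * α) :=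
    (div_lt_iff₀ hα').1 (by linarith)
  have hd₀ : γ < d - 1 := by
    have : γ * (1 - 2 * γ * α) ≤ γ * (1 - α) := by
      nlinarith [mul_nonneg (hx.trans hxα) (by linarith : (0:ℝ) ≤ 2 * γ - 1)]
    exact lt_of_mul_lt_mul_right (this.trans_lt hdα) hα'.le
  -- the left side is affine in `x` and positive at `x = 0` and `x = α`
  rcases le_total γ (2 * γ * (d - 1)) with h | h
  · nlinarith [mul_le_mul_of_nonneg_right hxα (sub_nonneg.2 h)]
  · nlinarith [mul_le_mul_of_nonneg_right hx (sub_nonneg.2 h)]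

theorem F_convex_general (d γ ε α : ℝ) (hγ : γ > 1 / 2) (hε : 0 < ε)
    (hα : 2 * γ * α < 1) (hd : d > 1 + γ * (1 - α) / (1 - 2 * γ * α)) :
    ConvexOn ℝ (Set.Icc ε α)
      (fun x => binEnt x + (1 / 2) * binEnt (2 * γ * x) +
        2 * d * γ * x * binEnt (1 / (2 * γ)) - d * binEnt x) := by
  have hα₁ : α ≤ 1 := by
    by_contra! h
    nlinarith
  have hF := convexOn_Icc_binEntropy_add_binEntropy_comp_mul (a := 1 - d) (b := 1 / 2)
    (k := 2 * d * γ * binEnt (1 / (2 * γ))) hε hα₁ (by linarith : 0 < 2 * γ) hα.le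
    fun x hx => by
      linarith [second_deriv_numerator_nonneg hγ (hε.trans hx.1).le hx.2.le hα hd]
  convert hF using 1
  funext x
  rw [binEnt_eq_binEntropy]
  ring

theorem F_convex (d γ ε α : ℝ) (hγ : γ > 1 / 2) (hε : 0 < ε) (hεα : ε < α)
    (hα : 2 * γ * α < 1) (hd : d > 1 + γ * (1 - α) / (1 - 2 * γ * α)) :
    ConvexOn ℝ (Set.Icc ε α)
      (fun x => binEnt x + (1 / 2) * binEnt (2 * γ * x) +
        2 * d * γ * x * binEnt (1 / (2 * γ)) - d * binEnt x) :=
  F_convex_general d γ ε α hγ hε hα hd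
end

section
/- Let H be the binary entropy function (natural log), α ∈ (0,1), γ > 1/2 with 2αγ < 1. Then H(α) - 2γα·H(1/(2γ)) > 0. -/
open Set

lemma binEnt_eq_binEntropy_s11 (x : ℝ) : binEnt x = Real.binEntropy x := by
  simp only [binEnt, Real.binEntropy, Real.log_inv]
  ring

lemma StrictConcaveOn.smul_lt_apply_smul {E : Type*} [AddCommGroup E] [Module ℝ E] {s : Set E}
    {f : E → ℝ} (hf : StrictConcaveOn ℝ s f) (h0 : 0 ∈ s) (hf0 : 0 ≤ f 0) {x : E} (hx : x ∈ s)
    (hx0 : x ≠ 0) {t : ℝ} (ht0 : 0 < t) (ht1 : t < 1) : t * f x < f (t • x) := by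
  have h := hf.2 hx h0 hx0 ht0 (sub_pos.2 ht1) (add_sub_cancel t 1)
  simp only [smul_zero, add_zero, smul_eq_mul] at h
  nlinarith

theorem entropy_denominator_pos_general (α γ : ℝ) (hα0 : 0 < α)
    (hγ : γ > 1 / 2) (hαγ : 2 * α * γ < 1) :
    binEnt α - 2 * γ * α * binEnt (1 / (2 * γ)) > 0 := by
  have h2γ : 1 < 2 * γ := by linarith
  have hx : 1 / (2 * γ) ∈ Icc (0 : ℝ) 1 :=
    ⟨by positivity, (div_le_one (by linarith)).2 h2γ.le⟩
  have hmix : 2 * γ * α * (1 / (2 * γ)) = α := by field_simp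
  have key := Real.strictConcave_binEntropy.smul_lt_apply_smul (t := 2 * γ * α)
    (by simp) (by simp) hx (by positivity) (by positivity) (by linarith)
  rw [smul_eq_mul, hmix] at key
  rw [binEnt_eq_binEntropy_s11, binEnt_eq_binEntropy_s11]
  linarith

theorem entropy_denominator_pos (α γ : ℝ) (hα0 : 0 < α) (hα1 : α < 1)
    (hγ : γ > 1 / 2) (hαγ : 2 * α * γ < 1) :
    binEnt α - 2 * γ * α * binEnt (1 / (2 * γ)) > 0 :=
  entropy_denominator_pos_general α γ hα0 hγ hαγ
end

section
/- Let C1, C3, C5 ∈ (0,1) with C1 < C3 < C5 and constants C2, C4, C6 defining a piecewise linear e(α) through (0,0),(C1,C2),(C3,C4),(C5,C6),(1,1) with slopes decreasing and slope 1 on [C3,C5] (i.e. C2/C1 > (C4-C2)/(C3-C1) > (C6-C4)/(C5-C3) = 1 > (1-C6)/(1-C5)), and C2 + C4 ≥ 1. Define the piecewise linear function o(α) on [C3,1] through (C3, C3-C1), (C5, C5-C1), (1,1). Then for all α ∈ [C3, 1] and all a, d ≥ 0 with a + d ≤ o(α): e(α-a) + a + e(α-d) + d - 1 ≥ o(α).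 -/
/-!
For fixed `α`, the map `x ↦ e (α - x) + x` is concave, because `e` is the minimum of the four
lines through its consecutive knots. Hence `(a, d) ↦ e (α - a) + a + e (α - d) + d` is concave on
the triangle `a, d ≥ 0`, `a + d ≤ o α`, and by symmetry it suffices to check the bound at the
vertices `(0, 0)` and `(o α, 0)`. On `[C3, C5]` this is linear arithmetic from `C2 + C4 ≥ 1` and
the slope conditions; on `[C5, 1]` the slack in both vertex bounds is affine in `α`, nonnegative
at `C5` and zero at `1`.
-/

open Set

theorem concaveOn_line (a b c : ℝ) : ConcaveOn ℝ univ fun t : ℝ => a + b * (t - c) :=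
  (concaveOn_id convex_univ).comp_affineMap
    (AffineMap.const ℝ ℝ a + b • (AffineMap.id ℝ ℝ - AffineMap.const ℝ ℝ c))

theorem ConcaveOn.comp_sub_add_id {f : ℝ → ℝ} (hf : ConcaveOn ℝ univ f) (α : ℝ) :
    ConcaveOn ℝ univ fun x => f (α - x) + x :=
  (hf.comp_affineMap (AffineMap.const ℝ ℝ α - AffineMap.id ℝ ℝ)).add (concaveOn_id convex_univ)

theorem ConcaveOn.secant_le {g : ℝ → ℝ} {S x : ℝ} (hg : ConcaveOn ℝ (Icc 0 S) g)
    (hx : x ∈ Icc 0 S) : (S - x) * g 0 + x * g S ≤ S * g x := by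
  obtain ⟨hx0, hxS⟩ := hx
  rcases hxS.lt_or_eq with hxS | rfl
  · have hS : 0 < S := hx0.trans_lt hxS
    have h := hg.2 (left_mem_Icc.2 hS.le) (right_mem_Icc.2 hS.le)
      (div_nonneg (sub_nonneg.2 hxS.le) hS.le) (div_nonneg hx0 hS.le)
      (by field_simp; ring)
    simp only [smul_eq_mul, mul_zero, zero_add] at h
    rw [div_mul_cancel₀ _ hS.ne'] at h
    calc (S - x) * g 0 + x * g S = S * ((S - x) / S * g 0 + x / S * g S) := by field_simp
      _ ≤ S * g x := by gcongr
  · simp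

theorem ConcaveOn.le_add_of_vertices {g : ℝ → ℝ} {S c a d : ℝ} (hg : ConcaveOn ℝ (Icc 0 S) g)
    (h₀ : c ≤ 2 * g 0) (hS : c ≤ g 0 + g S) (ha : 0 ≤ a) (hd : 0 ≤ d) (had : a + d ≤ S) :
    c ≤ g a + g d := by
  have hsa := hg.secant_le ⟨ha, by linarith⟩
  have hsd := hg.secant_le ⟨hd, by linarith⟩
  rcases ((add_nonneg ha hd).trans had).lt_or_eq with hS0 | rfl
  · refine le_of_mul_le_mul_left ?_ hS0
    calc S * c = (S - (a + d)) * c + (a + d) * c := by ring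
      _ ≤ (S - (a + d)) * (2 * g 0) + (a + d) * (g 0 + g S) := by gcongr
      _ = ((S - a) * g 0 + a * g S) + ((S - d) * g 0 + d * g S) := by ring
      _ ≤ S * (g a + g d) := by linarith
  · obtain rfl : a = 0 := by linarith
    obtain rfl : d = 0 := by linarith
    linarith

/-- The function `e` of `overlap_cut_bound`. -/
noncomputable def envelope (C1 C2 C3 C4 C5 C6 : ℝ) : ℝ → ℝ := fun α : ℝ =>
  if α ≤ C1 then (C2 / C1) * α
  else if α ≤ C3 then C2 + ((C4 - C2) / (C3 - C1)) * (α - C1)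
  else if α ≤ C5 then C4 + (α - C3)
  else C6 + ((1 - C6) / (1 - C5)) * (α - C5)

/-- The function `o` of `overlap_cut_bound`. -/
noncomputable def overlap (C1 C5 : ℝ) : ℝ → ℝ := fun α : ℝ =>
  if α ≤ C5 then α - C1
  else (C5 - C1) + ((1 - (C5 - C1)) / (1 - C5)) * (α - C5)

structure EnvelopeSlopes (C1 C2 C3 C4 C5 C6 : ℝ) : Prop where
  pos : 0 < C1
  lt₁₃ : C1 < C3
  lt₃₅ : C3 < C5
  lt₅₁ : C5 < 1
  slope₁ : C2 / C1 > (C4 - C2) / (C3 - C1)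
  slope₂ : (C4 - C2) / (C3 - C1) > 1
  slope₃ : C6 - C4 = C5 - C3
  slope₄ : (1 : ℝ) > (1 - C6) / (1 - C5)

namespace EnvelopeSlopes

variable {C1 C2 C3 C4 C5 C6 : ℝ}

theorem sub_lt_sub (hP : EnvelopeSlopes C1 C2 C3 C4 C5 C6) : C3 - C1 < C4 - C2 :=
  (one_lt_div (sub_pos.2 hP.lt₁₃)).1 hP.slope₂

theorem envelope_eq_min (hP : EnvelopeSlopes C1 C2 C3 C4 C5 C6) (t : ℝ) :
    envelope C1 C2 C3 C4 C5 C6 t =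
      min (min (min (C2 + C2 / C1 * (t - C1)) (C2 + (C4 - C2) / (C3 - C1) * (t - C1)))
        (C4 + 1 * (t - C3))) (C6 + (1 - C6) / (1 - C5) * (t - C5)) := by
  unfold envelope
  set m₁ := C2 / C1
  set m₂ := (C4 - C2) / (C3 - C1)
  set m₄ := (1 - C6) / (1 - C5)
  have h₁₃ := hP.lt₁₃
  have h₃₅ := hP.lt₃₅
  have hm₁C1 : m₁ * C1 = C2 := div_mul_cancel₀ _ hP.pos.ne'
  have hm₂C31 : m₂ * (C3 - C1) = C4 - C2 := div_mul_cancel₀ _ (sub_pos.2 h₁₃).ne'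
  have hm₁ : 0 < m₁ - m₂ := sub_pos.2 hP.slope₁
  have hm₂ : 0 < m₂ - 1 := sub_pos.2 hP.slope₂
  have hm₄ : 0 < 1 - m₄ := sub_pos.2 hP.slope₄
  have h₆₄ := hP.slope₃
  clear_value m₁ m₂ m₄
  rw [show m₁ * t = C2 + m₁ * (t - C1) by linear_combination hm₁C1,
    show C4 + (t - C3) = C4 + 1 * (t - C3) by ring]
  split_ifs <;>
    refine le_antisymm (le_min (le_min (le_min ?_ ?_) ?_) ?_) (by simp) <;>
    nlinarith

theorem concaveOn_envelope (hP : EnvelopeSlopes C1 C2 C3 C4 C5 C6) :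
    ConcaveOn ℝ univ (envelope C1 C2 C3 C4 C5 C6) :=
  ((((concaveOn_line _ _ _).inf (concaveOn_line _ _ _)).inf (concaveOn_line _ _ _)).inf
    (concaveOn_line _ _ _)).congr fun t _ => (hP.envelope_eq_min t).symm

theorem envelope_of_mem_Icc (hP : EnvelopeSlopes C1 C2 C3 C4 C5 C6) {t : ℝ}
    (ht : t ∈ Icc C3 C5) : envelope C1 C2 C3 C4 C5 C6 t = C4 + (t - C3) := by
  have h₁₃ := hP.lt₁₃
  unfold envelope
  rw [if_neg (by linarith [ht.1])]
  rcases ht.1.eq_or_lt with rfl | h₃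
  · rw [if_pos le_rfl, div_mul_cancel₀ _ (sub_pos.2 h₁₃).ne']
    ring
  · rw [if_neg h₃.not_ge, if_pos ht.2]

theorem exists_vertex_values_of_mem_Ioc (hP : EnvelopeSlopes C1 C2 C3 C4 C5 C6) {α : ℝ}
    (hα : α ∈ Ioc C5 1) :
    ∃ s, 0 ≤ s ∧ α = 1 - (1 - C5) * s ∧ overlap C1 C5 α = α - C1 * s ∧
      envelope C1 C2 C3 C4 C5 C6 α = 1 - (1 - C6) * s ∧
      envelope C1 C2 C3 C4 C5 C6 (α - overlap C1 C5 α) = C2 * s := by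
  have h₅₁ : 0 < 1 - C5 := sub_pos.2 hP.lt₅₁
  have h₃₅ := hP.lt₃₅
  have h₁₃ := hP.lt₁₃
  have ho : overlap C1 C5 α = α - C1 * ((1 - α) / (1 - C5)) := by
    rw [overlap, if_neg hα.1.not_ge]
    field_simp
    ring
  refine ⟨(1 - α) / (1 - C5), div_nonneg (sub_nonneg.2 hα.2) h₅₁.le, by field_simp; ring, ho,
    ?_, ?_⟩
  · rw [envelope, if_neg (by linarith [hα.1]), if_neg (by linarith [hα.1]), if_neg hα.1.not_ge]
    field_simp
    ring
  · have hs : (1 - α) / (1 - C5) ≤ 1 := (div_le_one h₅₁).2 (by linarith [hα.1])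
    rw [ho, sub_sub_cancel, envelope, if_pos (mul_le_of_le_one_right hP.pos.le hs)]
    field_simp [hP.pos.ne']

theorem vertex_bounds (hP : EnvelopeSlopes C1 C2 C3 C4 C5 C6) (hC24 : C2 + C4 ≥ 1) {α : ℝ}
    (hα : α ∈ Icc C3 1) :
    overlap C1 C5 α + 1 ≤ 2 * envelope C1 C2 C3 C4 C5 C6 α ∧
      1 ≤ envelope C1 C2 C3 C4 C5 C6 α + envelope C1 C2 C3 C4 C5 C6 (α - overlap C1 C5 α) := by
  have h₄₂ := hP.sub_lt_sub
  have h₃₅ := hP.lt₃₅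
  rcases le_or_gt α C5 with hα₅ | hα₅
  · have ho : overlap C1 C5 α = α - C1 := if_pos hα₅
    have heα := hP.envelope_of_mem_Icc ⟨hα.1, hα₅⟩
    have heC1 : envelope C1 C2 C3 C4 C5 C6 C1 = C2 := by
      rw [envelope, if_pos le_rfl, div_mul_cancel₀ _ hP.pos.ne']
    rw [ho, sub_sub_cancel, heC1, heα]
    constructor <;> linarith [hα.1]
  · obtain ⟨s, hs, hα', ho, heα, heo⟩ := hP.exists_vertex_values_of_mem_Ioc ⟨hα₅, hα.2⟩
    rw [heo, ho, heα]
    have hK₀ : 0 ≤ 2 * C6 - C5 + C1 - 1 := by linarith [hP.slope₃]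
    have hK₁ : 0 ≤ C2 + C6 - 1 := by linarith [hP.slope₃]
    constructor
    · linear_combination hα' + mul_nonneg hs hK₀
    · linear_combination mul_nonneg hs hK₁

end EnvelopeSlopes

theorem overlap_cut_bound_general (C1 C2 C3 C4 C5 C6 : ℝ) (e o : ℝ → ℝ)
    (hC1 : 0 < C1) (h13 : C1 < C3) (h35 : C3 < C5) (h51 : C5 < 1)
    (hslope1 : C2 / C1 > (C4 - C2) / (C3 - C1))
    (hslope2 : (C4 - C2) / (C3 - C1) > 1)
    (hslope3 : C6 - C4 = C5 - C3)
    (hslope4 : (1 : ℝ) > (1 - C6) / (1 - C5))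
    (hC24 : C2 + C4 ≥ 1)
    (he : e = fun α : ℝ =>
      if α ≤ C1 then (C2 / C1) * α
      else if α ≤ C3 then C2 + ((C4 - C2) / (C3 - C1)) * (α - C1)
      else if α ≤ C5 then C4 + (α - C3)
      else C6 + ((1 - C6) / (1 - C5)) * (α - C5))
    (ho : o = fun α : ℝ =>
      if α ≤ C5 then α - C1
      else (C5 - C1) + ((1 - (C5 - C1)) / (1 - C5)) * (α - C5)) :
    ∀ α ∈ Set.Icc C3 1, ∀ a d : ℝ, 0 ≤ a → 0 ≤ d → a + d ≤ o α →
      e (α - a) + a + e (α - d) + d - 1 ≥ o α := by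
  have he' : e = envelope C1 C2 C3 C4 C5 C6 := he
  have ho' : o = overlap C1 C5 := ho
  subst he' ho'
  have hP : EnvelopeSlopes C1 C2 C3 C4 C5 C6 :=
    ⟨hC1, h13, h35, h51, hslope1, hslope2, hslope3, hslope4⟩
  intro α hα a d ha hd had
  obtain ⟨hvert₀, hvert₁⟩ := hP.vertex_bounds hC24 hα
  have hg := (hP.concaveOn_envelope.comp_sub_add_id α).subset (subset_univ _)
    (convex_Icc 0 (overlap C1 C5 α))
  have hcut := hg.le_add_of_vertices (c := overlap C1 C5 α + 1)
    (by simp only [sub_zero, add_zero]; linarith) (by simp only [sub_zero, add_zero]; linarith)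
    ha hd had
  linarith

theorem overlap_cut_bound (C1 C2 C3 C4 C5 C6 : ℝ) (e o : ℝ → ℝ)
    (hC1 : 0 < C1) (h13 : C1 < C3) (h35 : C3 < C5) (h51 : C5 < 1)
    (hC2 : 0 < C2) (hC4 : C4 < 1) (hC6 : C6 < 1)
    (hslope1 : C2 / C1 > (C4 - C2) / (C3 - C1))
    (hslope2 : (C4 - C2) / (C3 - C1) > 1)
    (hslope3 : C6 - C4 = C5 - C3)
    (hslope4 : (1 : ℝ) > (1 - C6) / (1 - C5))
    (hC24 : C2 + C4 ≥ 1)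
    (he : e = fun α : ℝ =>
      if α ≤ C1 then (C2 / C1) * α
      else if α ≤ C3 then C2 + ((C4 - C2) / (C3 - C1)) * (α - C1)
      else if α ≤ C5 then C4 + (α - C3)
      else C6 + ((1 - C6) / (1 - C5)) * (α - C5))
    (ho : o = fun α : ℝ =>
      if α ≤ C5 then α - C1
      else (C5 - C1) + ((1 - (C5 - C1)) / (1 - C5)) * (α - C5)) :
    ∀ α ∈ Set.Icc C3 1, ∀ a d : ℝ, 0 ≤ a → 0 ≤ d → a + d ≤ o α →
      e (α - a) + a + e (α - d) + d - 1 ≥ o α :=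
  overlap_cut_bound_general C1 C2 C3 C4 C5 C6 e o hC1 h13 h35 h51 hslope1 hslope2 hslope3 hslope4
    hC24 he ho
end

section
/- Let C1=0.2301, C3=0.3322, C5=0.4377, and let e be the piecewise linear function through (0,0),(C1,0.4377),(C3,0.5623),(C5,0.6678),(1,1), and o the piecewise linear function on [C3,1] through (C3,C3-C1),(C5,C5-C1),(1,1). Then for all α ∈ [C3,1]: (e(α) + o(α))/2 ≥ α. -/
/-! The inequality is an equality: on each of `[C3, C5]` and `[C5, 1]` both `e` and `o` are
affine, and `e + o` agrees with `2α` at the breakpoints `C3`, `C5`, `1`. -/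

/-- Piecewise linear function through (0,0), (0.2301,0.4377), (0.3322,0.5623),
(0.4377,0.6678), (1,1). -/
noncomputable def eFun (α : ℝ) : ℝ :=
  if α ≤ 0.2301 then (0.4377 / 0.2301) * α
  else if α ≤ 0.3322 then 0.4377 + ((0.5623 - 0.4377) / (0.3322 - 0.2301)) * (α - 0.2301)
  else if α ≤ 0.4377 then 0.5623 + (α - 0.3322)
  else 0.6678 + ((1 - 0.6678) / (1 - 0.4377)) * (α - 0.4377)

/-- Piecewise linear function on [0.3322,1] through (0.3322, 0.3322-0.2301),
(0.4377, 0.4377-0.2301), (1,1). -/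
noncomputable def oFun (α : ℝ) : ℝ :=
  if α ≤ 0.4377 then α - 0.2301
  else (0.4377 - 0.2301) + ((1 - (0.4377 - 0.2301)) / (1 - 0.4377)) * (α - 0.4377)

lemma eFun_of_le_of_le {α : ℝ} (h₁ : 0.3322 ≤ α) (h₂ : α ≤ 0.4377) : eFun α = α + 0.2301 := by
  unfold eFun
  rw [if_neg (by linarith)]
  split_ifs with h
  · obtain rfl : α = 0.3322 := le_antisymm h h₁
    norm_num
  · ring

lemma eFun_of_lt {α : ℝ} (h : 0.4377 < α) :
    eFun α = 0.6678 + (0.3322 / 0.5623) * (α - 0.4377) := by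
  unfold eFun
  rw [if_neg (by linarith), if_neg (by linarith), if_neg h.not_ge]
  norm_num

lemma oFun_of_le {α : ℝ} (h : α ≤ 0.4377) : oFun α = α - 0.2301 :=
  if_pos h

lemma oFun_of_lt {α : ℝ} (h : 0.4377 < α) :
    oFun α = 0.2076 + (0.7924 / 0.5623) * (α - 0.4377) := by
  unfold oFun
  rw [if_neg h.not_ge]
  norm_num

lemma eFun_add_oFun {α : ℝ} (h : 0.3322 ≤ α) : eFun α + oFun α = 2 * α := by
  rcases le_or_gt α 0.4377 with hle | hlt
  · rw [eFun_of_le_of_le h hle, oFun_of_le hle]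
    ring
  · rw [eFun_of_lt hlt, oFun_of_lt hlt]
    ring

theorem hall_condition_estimate :
    ∀ α ∈ Set.Icc (0.3322 : ℝ) 1, (eFun α + oFun α) / 2 ≥ α := by
  rintro α ⟨h, -⟩
  rw [eFun_add_oFun h]
  linarith
end

section
/- Let H be the binary entropy function (natural log), and let d be a real number with d > 2 + β for some real β > 1. Then there exists ε > 0 and a constant C such that for all natural numbers N ≥ 1 and all integers k with 1 ≤ k ≤ ε·N: N · C(N,k) · C(N, ⌈βk⌉ - 1) · (C(⌈βk⌉-1, k) / C(N,k))^d ≤ k · (C · (k/N)^(d-β-2))^k. -/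
/-!
Each factor is bounded by a standard estimate: `C(n, j) ≤ (e n / j) ^ j`, and
`C(m, k) / C(n, k) ≤ (m / n) ^ k` for `m ≤ n`, since `(m - i) / (n - i) ≤ m / n` termwise.
Take `ε = 1 / β`, so that `k ≤ m := ⌈β k⌉ - 1 ≤ β k ≤ N`, and put `t = k / N ≤ 1`.
The left side is then at most
`N ((e / t) ^ (1 + β) (β t) ^ d) ^ k = N t ^ k (e ^ (1 + β) β ^ d t ^ (d - β - 2)) ^ k`,
and `N t ^ k ≤ N t = k`.
-/

open Real

namespace Nat

theorem descFactorial_mul_pow_le_descFactorial_mul_pow {m n : ℕ} (h : m ≤ n) (k : ℕ) :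
    m.descFactorial k * n ^ k ≤ n.descFactorial k * m ^ k := by
  induction k with
  | zero => simp
  | succ k ih =>
    have step : (m - k) * n ≤ (n - k) * m := by
      rw [Nat.sub_mul, Nat.sub_mul, mul_comm n m]
      exact Nat.sub_le_sub_left (Nat.mul_le_mul_left k h) _
    rw [descFactorial_succ, descFactorial_succ, pow_succ, pow_succ]
    calc _ = (m - k) * n * (m.descFactorial k * n ^ k) := by ring
      _ ≤ (n - k) * m * (n.descFactorial k * m ^ k) := Nat.mul_le_mul step ih
      _ = _ := by ring

theorem choose_mul_pow_le_choose_mul_pow {m n : ℕ} (h : m ≤ n) (k : ℕ) :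
    m.choose k * n ^ k ≤ n.choose k * m ^ k := by
  refine le_of_mul_le_mul_left ?_ k.factorial_pos
  simpa only [descFactorial_eq_factorial_mul_choose, mul_assoc] using
    descFactorial_mul_pow_le_descFactorial_mul_pow h k

theorem choose_div_choose_le_div_pow {m n : ℕ} (h : m ≤ n) (k : ℕ) :
    (m.choose k : ℝ) / n.choose k ≤ ((m : ℝ) / n) ^ k := by
  rcases eq_zero_or_pos (n.choose k) with h0 | hpos
  · rw [h0, cast_zero, div_zero]; positivity
  have hpow : (0 : ℝ) < (n : ℝ) ^ k := mod_cast hpos.trans_le (choose_le_pow n k)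
  rw [div_pow, div_le_div_iff₀ (mod_cast hpos) hpow, mul_comm _ (n.choose k : ℝ)]
  exact_mod_cast choose_mul_pow_le_choose_mul_pow h k

theorem choose_le_exp_mul_div_pow (n j : ℕ) : (n.choose j : ℝ) ≤ (exp 1 * n / j) ^ j := by
  have hjj : (j : ℝ) ^ j ≠ 0 := by
    rcases eq_zero_or_pos j with rfl | hj
    · simp
    · positivity
  calc (n.choose j : ℝ) ≤ (n : ℝ) ^ j / j.factorial := choose_le_pow_div j n
    _ = ((n : ℝ) / j) ^ j * ((j : ℝ) ^ j / j.factorial) := by rw [div_pow]; field_simp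
    _ ≤ ((n : ℝ) / j) ^ j * exp j := by
      gcongr; exact Real.pow_div_factorial_le_exp _ j.cast_nonneg j
    _ = (exp 1 * n / j) ^ j := by rw [← exp_one_pow, ← mul_pow]; ring

theorem choose_le_exp_mul_div_rpow_pow {n k m : ℕ} {β : ℝ} (hk : 0 < k) (hkn : k ≤ n)
    (hkm : k ≤ m) (hmβ : (m : ℝ) ≤ β * k) :
    (n.choose m : ℝ) ≤ ((exp 1 * n / k) ^ β) ^ k := by
  have hk' : (0 : ℝ) < k := by exact_mod_cast hk
  have hbase : 1 ≤ exp 1 * n / k := by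
    rw [le_div_iff₀ hk', one_mul]
    exact (show (k : ℝ) ≤ n by exact_mod_cast hkn).trans (le_mul_of_one_le_left n.cast_nonneg
      (one_le_exp zero_le_one))
  calc (n.choose m : ℝ) ≤ (exp 1 * n / m) ^ m := choose_le_exp_mul_div_pow n m
    _ ≤ (exp 1 * n / k) ^ m := by gcongr
    _ = (exp 1 * n / k) ^ (m : ℝ) := (rpow_natCast _ m).symm
    _ ≤ (exp 1 * n / k) ^ (β * k) := rpow_le_rpow_of_exponent_le hbase hmβ
    _ = ((exp 1 * n / k) ^ β) ^ k := by rw [rpow_mul (by positivity), rpow_natCast]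

theorem le_ceil_sub_one_of_lt {k : ℕ} {x : ℝ} (h : (k : ℝ) < x) : k ≤ ⌈x⌉₊ - 1 := by
  have := lt_ceil.2 h
  omega

theorem cast_ceil_sub_one_le {x : ℝ} (hx : 0 ≤ x) : ((⌈x⌉₊ - 1 : ℕ) : ℝ) ≤ x := by
  have := ceil_lt_add_one hx
  rcases eq_zero_or_pos ⌈x⌉₊ with h | h
  · simpa [h] using hx
  · rw [cast_sub h, cast_one]; linarith

end Nat

theorem exp_div_mul_rpow_mul_rpow {β d t : ℝ} (hβ : 0 ≤ β) (ht : 0 < t) :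
    exp 1 / t * (exp 1 / t) ^ β * (β * t) ^ d = exp (1 + β) * β ^ d * t ^ (d - β - 2) * t := by
  rw [div_rpow (exp_pos 1).le ht.le, mul_rpow hβ ht.le, exp_one_rpow, rpow_sub ht, rpow_sub ht,
    rpow_two, exp_add]
  have : t ^ β ≠ 0 := (rpow_pos_of_pos ht β).ne'
  field_simp

theorem mul_choose_mul_choose_mul_rpow_le {N k m : ℕ} {β d : ℝ} (hk : 0 < k) (hkm : k ≤ m)
    (hmβ : (m : ℝ) ≤ β * k) (hmN : m ≤ N) (hd : 0 ≤ d) :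
    (N : ℝ) * N.choose k * N.choose m * ((m.choose k : ℝ) / N.choose k) ^ d ≤
      N * (exp 1 * N / k * (exp 1 * N / k) ^ β * (β * k / N) ^ d) ^ k := by
  have hratio : ((m.choose k : ℝ) / N.choose k) ^ d ≤ ((β * k / N) ^ d) ^ k := calc
    _ ≤ (((m : ℝ) / N) ^ k) ^ d :=
      rpow_le_rpow (by positivity) (Nat.choose_div_choose_le_div_pow hmN k) hd
    _ ≤ ((β * k / N) ^ k) ^ d := by gcongr
    _ = ((β * k / N) ^ d) ^ k :=
      (rpow_pow_comm (div_nonneg (m.cast_nonneg.trans hmβ) N.cast_nonneg) d k).symm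
  calc
    _ ≤ N * (exp 1 * N / k) ^ k * ((exp 1 * N / k) ^ β) ^ k * ((β * k / N) ^ d) ^ k := by
      gcongr
      · exact Nat.choose_le_exp_mul_div_pow N k
      · exact Nat.choose_le_exp_mul_div_rpow_pow hk (hkm.trans hmN) hkm hmβ
    _ = _ := by ring

theorem small_sets_estimate (β d : ℝ) (hβ : 1 < β) (hd : d > 2 + β) :
    ∃ ε > (0 : ℝ), ∃ C : ℝ, ∀ N k : ℕ, 1 ≤ N → 1 ≤ k → (k : ℝ) ≤ ε * N →
      (N : ℝ) * (N.choose k : ℝ) * (N.choose (⌈β * k⌉₊ - 1) : ℝ) *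
          Real.rpow (((⌈β * k⌉₊ - 1).choose k : ℝ) / (N.choose k : ℝ)) d ≤
        (k : ℝ) * (C * Real.rpow ((k : ℝ) / N) (d - β - 2)) ^ k := by
  have hβ0 : 0 < β := one_pos.trans hβ
  refine ⟨β⁻¹, inv_pos.2 hβ0, exp (1 + β) * β ^ d, fun N k hN hk hkN => ?_⟩
  simp only [rpow_eq_pow]
  set m := ⌈β * k⌉₊ - 1
  have hkm : k ≤ m := Nat.le_ceil_sub_one_of_lt (lt_mul_of_one_lt_left (by positivity) hβ)
  have hmβ : (m : ℝ) ≤ β * k := Nat.cast_ceil_sub_one_le (by positivity)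
  have hmN : m ≤ N := by exact_mod_cast hmβ.trans ((le_inv_mul_iff₀ hβ0).1 hkN)
  set t := (k : ℝ) / N
  have ht0 : 0 < t := by positivity
  have ht1 : t ≤ 1 := div_le_one_of_le₀ (by exact_mod_cast hkm.trans hmN) N.cast_nonneg
  have hNt : N * t ^ k ≤ k := calc
    N * t ^ k ≤ N * t := by gcongr; exact pow_le_of_le_one ht0.le ht1 (by omega)
    _ = k := mul_div_cancel₀ _ (by positivity)
  calc
    _ ≤ N * (exp 1 / t * (exp 1 / t) ^ β * (β * t) ^ d) ^ k := by
      rw [div_div_eq_mul_div, ← mul_div_assoc]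
      exact mul_choose_mul_choose_mul_rpow_le hk hkm hmβ hmN (by linarith)
    _ = N * t ^ k * (exp (1 + β) * β ^ d * t ^ (d - β - 2)) ^ k := by
      rw [exp_div_mul_rpow_mul_rpow hβ0.le ht0]; ring
    _ ≤ k * (exp (1 + β) * β ^ d * t ^ (d - β - 2)) ^ k := by gcongr
end
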